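/- The left coset space Sp(2)/P, where Sp(2) is the group of 2×2 quaternionic matrices Q with Q⁻¹ = Q* and P ≤ Sp(2) is the subgroup of all matrices diag(a,b) and [[0,a],[b,0]] with a, b unit quaternions, equipped with the quotient topology, is homeomorphic to real projective 4-space ℝP⁴ (the quotient of S⁴ by the antipodal involution). -/

import Mathlib

open Quaternion Matrix

/-- `Sp(2)`: the group of `2×2` quaternionic matrices `Q` with `Q⁻¹ = Q*`
(quaternionic conjugate transpose), i.e. the unitary group of `Matrix (Fin 2) (Fin 2) ℍ`. -/
abbrev Sp2 : Type := unitary (Matrix (Fin 2) (Fin 2) ℍ[ℝ])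

/-- The subgroup `P ≤ Sp(2)` of all matrices `diag(a,b)` and `[[0,a],[b,0]]` with `a`, `b`
unit quaternions; it is the wreath product `S³ ≀ C₂`. -/
noncomputable def quatWreathP : Subgroup Sp2 where
  carrier := {Q | (∃ a b : ℍ[ℝ], ‖a‖ = 1 ∧ ‖b‖ = 1 ∧ Q.val = !![a, 0; 0, b]) ∨
    (∃ a b : ℍ[ℝ], ‖a‖ = 1 ∧ ‖b‖ = 1 ∧ Q.val = !![0, a; b, 0])}
  one_mem' := Or.inl ⟨1, 1, by simp, by simp, by simp [Matrix.one_fin_two]⟩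
  mul_mem' := by
    rintro P Q (⟨a, b, ha, hb, hP⟩ | ⟨a, b, ha, hb, hP⟩)
      (⟨a', b', ha', hb', hQ⟩ | ⟨a', b', ha', hb', hQ⟩)
    · refine Or.inl ⟨a * a', b * b', by simp [ha, ha'], by simp [hb, hb'], ?_⟩
      show P.val * Q.val = _
      rw [hP, hQ]; simp [Matrix.mul_fin_two]
    · refine Or.inr ⟨a * a', b * b', by simp [ha, ha'], by simp [hb, hb'], ?_⟩
      show P.val * Q.val = _
      rw [hP, hQ]; simp [Matrix.mul_fin_two]
    · refine Or.inr ⟨a * b', b * a', by simp [ha, hb'], by simp [hb, ha'], ?_⟩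
      show P.val * Q.val = _
      rw [hP, hQ]; simp [Matrix.mul_fin_two]
    · refine Or.inl ⟨a * b', b * a', by simp [ha, hb'], by simp [hb, ha'], ?_⟩
      show P.val * Q.val = _
      rw [hP, hQ]; simp [Matrix.mul_fin_two]
  inv_mem' := by
    rintro Q (⟨a, b, ha, hb, hQ⟩ | ⟨a, b, ha, hb, hQ⟩)
    · refine Or.inl ⟨star a, star b, by simp [ha], by simp [hb], ?_⟩
      show star Q.val = _
      rw [hQ]
      refine Matrix.ext fun i j => ?_
      fin_cases i <;> fin_cases j <;> simp [Matrix.star_apply]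
    · refine Or.inr ⟨star b, star a, by simp [hb], by simp [ha], ?_⟩
      show star Q.val = _
      rw [hQ]
      refine Matrix.ext fun i j => ?_
      fin_cases i <;> fin_cases j <;> simp [Matrix.star_apply]

/-- Real projective 4-space, as the quotient of the 4-sphere `S⁴` by the antipodal
involution `x ↦ −x`. -/
abbrev RealProjectiveFourSpace : Type :=
  Quot (fun x y : Metric.sphere (0 : EuclideanSpace ℝ (Fin 5)) 1 =>
    (x : EuclideanSpace ℝ (Fin 5)) = -(y : EuclideanSpace ℝ (Fin 5)))


namespace Sp2Aux

lemma norm_eq_one_of_normSq {q : ℍ[ℝ]} (h : Quaternion.normSq q = 1) : ‖q‖ = 1 := by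
  have h2 : Quaternion.normSq q = ‖q‖ * ‖q‖ := Quaternion.normSq_eq_norm_mul_self q
  nlinarith [norm_nonneg q]

lemma normSq_coe' (r : ℝ) : Quaternion.normSq (r : ℍ[ℝ]) = r ^ 2 := by
  simp [Quaternion.normSq_def']

lemma coe_comm (r : ℝ) (a : ℍ[ℝ]) : (r : ℍ[ℝ]) * a = a * r := by
  rw [Quaternion.coe_mul_eq_smul, Quaternion.mul_coe_eq_smul]

lemma coe_ne_zero' {r : ℝ} (h : r ≠ 0) : (r : ℍ[ℝ]) ≠ 0 := by
  intro h0; exact h (by simpa using congrArg QuaternionAlgebra.re h0)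

/-- scaling quaternion between two elements of equal norm -/
lemma scale {x x' : ℍ[ℝ]} (hx : x ≠ 0) (hn : Quaternion.normSq x = Quaternion.normSq x') :
    ∃ q : ℍ[ℝ], Quaternion.normSq q = 1 ∧ x' = x * q := by
  have hnx : Quaternion.normSq x ≠ 0 := by
    simpa [Quaternion.normSq_eq_zero] using hx
  refine ⟨(Quaternion.normSq x)⁻¹ • (star x * x'), ?_, ?_⟩
  · rw [← Quaternion.coe_mul_eq_smul, _root_.map_mul, _root_.map_mul, normSq_coe',
      Quaternion.normSq_star, ← hn]
    field_simp
  · rw [mul_smul_comm, ← mul_assoc, Quaternion.self_mul_star, Quaternion.coe_mul_eq_smul,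
      smul_smul, inv_mul_cancel₀ hnx, one_smul]

/-- Fibers of the quaternionic Hopf map. -/
lemma fiber {a c a' c' : ℍ[ℝ]}
    (h1 : Quaternion.normSq a + Quaternion.normSq c = 1)
    (h2 : a * star c = a' * star c')
    (h3 : Quaternion.normSq a = Quaternion.normSq a')
    (h4 : Quaternion.normSq c = Quaternion.normSq c') :
    ∃ q : ℍ[ℝ], Quaternion.normSq q = 1 ∧ a' = a * q ∧ c' = c * q := by
  by_cases hc : c = 0
  · have hc' : c' = 0 := by
      rw [← Quaternion.normSq_eq_zero, ← h4, hc, map_zero]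
    have ha : a ≠ 0 := by
      intro h0
      rw [hc, h0] at h1; simp at h1
    obtain ⟨q, hq, haq⟩ := scale ha h3
    exact ⟨q, hq, haq, by simp [hc, hc']⟩
  · obtain ⟨q, hq, hcq⟩ := scale hc h4
    refine ⟨q, hq, ?_, hcq⟩
    have hnc : Quaternion.normSq c ≠ 0 := by simpa [Quaternion.normSq_eq_zero] using hc
    have key : a * (star c * c) = a' * (star c' * c) := by
      rw [← mul_assoc, ← mul_assoc, h2]
    rw [Quaternion.star_mul_self] at key
    have hc'c : star c' * c = star q * ((Quaternion.normSq c : ℝ) : ℍ[ℝ]) := by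
      rw [hcq, StarMul.star_mul, mul_assoc, Quaternion.star_mul_self]
    rw [hc'c, ← mul_assoc] at key
    have h5 : a = a' * star q := mul_right_cancel₀ (coe_ne_zero' hnc) key
    rw [h5, mul_assoc, Quaternion.star_mul_self, hq]
    simp

/-- Two unit vectors orthogonal to the same unit vector in `ℍ²` differ by right
multiplication by a unit quaternion. -/
lemma orth {v0 v1 x y x' y' : ℍ[ℝ]}
    (hv : Quaternion.normSq v0 + Quaternion.normSq v1 = 1)
    (hw : Quaternion.normSq x + Quaternion.normSq y = 1)
    (hw' : Quaternion.normSq x' + Quaternion.normSq y' = 1)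
    (ho : star v0 * x + star v1 * y = 0)
    (ho' : star v0 * x' + star v1 * y' = 0) :
    ∃ q : ℍ[ℝ], Quaternion.normSq q = 1 ∧ x' = x * q ∧ y' = y * q := by
  by_cases hv1 : v1 = 0
  · have hv0 : star v0 ≠ 0 := by
      simp only [star_ne_zero]
      intro h0; rw [h0, hv1] at hv; simp at hv
    have hx0 : x = 0 := by
      have : star v0 * x = 0 := by simpa [hv1] using ho
      exact (mul_eq_zero.mp this).resolve_left hv0
    have hx0' : x' = 0 := by
      have : star v0 * x' = 0 := by simpa [hv1] using ho'
      exact (mul_eq_zero.mp this).resolve_left hv0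
    have hy : y ≠ 0 := by
      intro h0; rw [hx0, h0] at hw; simp at hw
    have hyy : Quaternion.normSq y = Quaternion.normSq y' := by
      rw [hx0] at hw; rw [hx0'] at hw'; simp at hw hw'; rw [hw, hw']
    obtain ⟨q, hq, hyq⟩ := scale hy hyy
    exact ⟨q, hq, by simp [hx0, hx0'], hyq⟩
  · have hsv1 : star v1 ≠ 0 := by simpa using hv1
    set k : ℍ[ℝ] := -((star v1)⁻¹ * star v0) with hk
    have hy : y = k * x := by
      have h5 : star v1 * y = -(star v0 * x) := eq_neg_of_add_eq_zero_right ho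
      have := congrArg (fun z => (star v1)⁻¹ * z) h5
      simpa [← mul_assoc, inv_mul_cancel₀ hsv1, hk, mul_neg, neg_mul] using this
    have hy' : y' = k * x' := by
      have h5 : star v1 * y' = -(star v0 * x') := eq_neg_of_add_eq_zero_right ho'
      have := congrArg (fun z => (star v1)⁻¹ * z) h5
      simpa [← mul_assoc, inv_mul_cancel₀ hsv1, hk, mul_neg, neg_mul] using this
    have hnorm : Quaternion.normSq x * (1 + Quaternion.normSq k) = 1 := by
      rw [hy, _root_.map_mul] at hw; ring_nf; ring_nf at hw; linarith
    have hnorm' : Quaternion.normSq x' * (1 + Quaternion.normSq k) = 1 := by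
      rw [hy', _root_.map_mul] at hw'; ring_nf; ring_nf at hw'; linarith
    have hkpos : (1 : ℝ) + Quaternion.normSq k ≠ 0 := by
      have := Quaternion.normSq_nonneg (a := k); intro h0; linarith
    have hxx : Quaternion.normSq x = Quaternion.normSq x' :=
      mul_right_cancel₀ hkpos (by rw [hnorm, hnorm'])
    have hxne : x ≠ 0 := by
      intro h0
      rw [h0, map_zero, zero_mul] at hnorm; exact one_ne_zero hnorm.symm
    obtain ⟨q, hq, hxq⟩ := scale hxne hxx
    exact ⟨q, hq, hxq, by rw [hy', hxq, hy, mul_assoc]⟩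

end Sp2Aux
namespace Sp2Aux

/-- The quaternionic Hopf map data: `(a, c) ↦ (2 a c̄, |a|² − |c|²)` as a point of `ℝ⁵`. -/
noncomputable def hopf (a c : ℍ[ℝ]) : EuclideanSpace ℝ (Fin 5) :=
  (EuclideanSpace.equiv (Fin 5) ℝ).symm
    ![2 * (a * star c).re, 2 * (a * star c).imI, 2 * (a * star c).imJ, 2 * (a * star c).imK,
      Quaternion.normSq a - Quaternion.normSq c]

lemma hopf_apply (a c : ℍ[ℝ]) (i : Fin 5) :
    hopf a c i = ![2 * (a * star c).re, 2 * (a * star c).imI, 2 * (a * star c).imJ,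
      2 * (a * star c).imK, Quaternion.normSq a - Quaternion.normSq c] i := rfl

lemma norm_hopf {a c : ℍ[ℝ]} (h : Quaternion.normSq a + Quaternion.normSq c = 1) :
    ‖hopf a c‖ = 1 := by
  rw [EuclideanSpace.norm_eq]
  rw [show (1:ℝ) = Real.sqrt 1 by simp]
  congr 1
  simp only [hopf_apply, Fin.sum_univ_five, Real.norm_eq_abs, sq_abs]
  have h1 : Quaternion.normSq (a * star c) = Quaternion.normSq a * Quaternion.normSq c := by
    rw [_root_.map_mul, Quaternion.normSq_star]
  have h2 := Quaternion.normSq_def' (a * star c)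
  simp only [Matrix.cons_val_zero, Matrix.cons_val_one, Matrix.head_cons, Matrix.cons_val_two,
    Matrix.tail_cons, Matrix.cons_val_three, Matrix.cons_val_four]
  nlinarith [h1, h2, h]

lemma hopf_mem_sphere {a c : ℍ[ℝ]} (h : Quaternion.normSq a + Quaternion.normSq c = 1) :
    hopf a c ∈ Metric.sphere (0 : EuclideanSpace ℝ (Fin 5)) 1 :=
  mem_sphere_zero_iff_norm.mpr (norm_hopf h)

/-- Right multiplication by a unit quaternion doesn't change the Hopf point. -/
lemma hopf_mul {a c : ℍ[ℝ]} (q : ℍ[ℝ]) (hq : Quaternion.normSq q = 1) :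
    hopf (a * q) (c * q) = hopf a c := by
  have key : a * q * star (c * q) = a * star c := by
    rw [StarMul.star_mul, mul_assoc, ← mul_assoc q, Quaternion.self_mul_star, hq]
    simp
  unfold hopf
  rw [key, _root_.map_mul, _root_.map_mul, hq, mul_one, mul_one]

/-- If the hopf data are negatives of each other, the hopf points are negatives. -/
lemma hopf_neg_of {a c a' c' : ℍ[ℝ]} (h2 : a' * star c' = -(a * star c))
    (h3 : Quaternion.normSq a' - Quaternion.normSq c'
      = -(Quaternion.normSq a - Quaternion.normSq c)) :
    hopf a' c' = -hopf a c := by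
  ext i
  have hre := congrArg QuaternionAlgebra.re h2
  have hi := congrArg QuaternionAlgebra.imI h2
  have hj := congrArg QuaternionAlgebra.imJ h2
  have hk := congrArg QuaternionAlgebra.imK h2
  simp only [Quaternion.re_neg, Quaternion.imI_neg, Quaternion.imJ_neg, Quaternion.imK_neg]
    at hre hi hj hk
  have hneg : ∀ (x : EuclideanSpace ℝ (Fin 5)) (i : Fin 5), (-x) i = -(x i) := fun _ _ => rfl
  rw [hneg]
  fin_cases i <;>
    simp [hopf_apply, hre, hi, hj, hk, h3] <;> ring

/-- extracting equations from hopf equality -/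
lemma hopf_inj_data {a c a' c' : ℍ[ℝ]} (h : hopf a c = hopf a' c') :
    a * star c = a' * star c' ∧
      Quaternion.normSq a - Quaternion.normSq c
        = Quaternion.normSq a' - Quaternion.normSq c' := by
  have h0 := congrArg (fun v : EuclideanSpace ℝ (Fin 5) => v 0) h
  have h1 := congrArg (fun v : EuclideanSpace ℝ (Fin 5) => v 1) h
  have h2 := congrArg (fun v : EuclideanSpace ℝ (Fin 5) => v 2) h
  have h3 := congrArg (fun v : EuclideanSpace ℝ (Fin 5) => v 3) h
  have h4 := congrArg (fun v : EuclideanSpace ℝ (Fin 5) => v 4) h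
  simp only [hopf_apply, Matrix.cons_val_zero, Matrix.cons_val_one, Matrix.head_cons,
    Matrix.cons_val_two, Matrix.tail_cons, Matrix.cons_val_three, Matrix.cons_val_four]
    at h0 h1 h2 h3 h4
  refine ⟨?_, h4⟩
  apply Quaternion.ext <;> linarith

end Sp2Aux
namespace Sp2Aux

variable {M : Matrix (Fin 2) (Fin 2) ℍ[ℝ]}

lemma entry_eq_of (h : M = 1) (i j : Fin 2) : M i j = (1 : Matrix (Fin 2) (Fin 2) ℍ[ℝ]) i j := by
  rw [h]

/-- coerced normSq sums from star-products -/
lemma normSq_sum_of_star {a c : ℍ[ℝ]} (h : star a * a + star c * c = 1) :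
    Quaternion.normSq a + Quaternion.normSq c = 1 := by
  rw [Quaternion.star_mul_self, Quaternion.star_mul_self, ← Quaternion.coe_add,
    ← Quaternion.coe_one] at h
  exact Quaternion.coe_injective h

lemma normSq_sum_of_self {a c : ℍ[ℝ]} (h : a * star a + c * star c = 1) :
    Quaternion.normSq a + Quaternion.normSq c = 1 := by
  rw [Quaternion.self_mul_star, Quaternion.self_mul_star, ← Quaternion.coe_add,
    ← Quaternion.coe_one] at h
  exact Quaternion.coe_injective h

section
variable (hsM : star M * M = 1) (hMs : M * star M = 1)

-- column identities (from star M * M = 1)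
include hsM in
lemma col1_normSq : Quaternion.normSq (M 0 0) + Quaternion.normSq (M 1 0) = 1 := by
  have := entry_eq_of hsM 0 0
  simp only [Matrix.mul_apply, Fin.sum_univ_two, Matrix.star_apply, Matrix.one_apply,
    Matrix.star_eq_conjTranspose, Matrix.conjTranspose_apply] at this
  exact normSq_sum_of_star (by simpa using this)

include hsM in
lemma col2_normSq : Quaternion.normSq (M 0 1) + Quaternion.normSq (M 1 1) = 1 := by
  have := entry_eq_of hsM 1 1
  simp only [Matrix.mul_apply, Fin.sum_univ_two, Matrix.star_apply, Matrix.one_apply,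
    Matrix.star_eq_conjTranspose, Matrix.conjTranspose_apply] at this
  exact normSq_sum_of_star (by simpa using this)

include hsM in
lemma col_orth : star (M 0 0) * M 0 1 + star (M 1 0) * M 1 1 = 0 := by
  have := entry_eq_of hsM 0 1
  simp only [Matrix.mul_apply, Fin.sum_univ_two, Matrix.one_apply,
    Matrix.star_eq_conjTranspose, Matrix.conjTranspose_apply] at this
  simpa using this

-- row identities (from M * star M = 1)
include hMs in
lemma row1_normSq : Quaternion.normSq (M 0 0) + Quaternion.normSq (M 0 1) = 1 := by
  have := entry_eq_of hMs 0 0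
  simp only [Matrix.mul_apply, Fin.sum_univ_two, Matrix.one_apply,
    Matrix.star_eq_conjTranspose, Matrix.conjTranspose_apply] at this
  exact normSq_sum_of_self (by simpa using this)

include hMs in
lemma row2_normSq : Quaternion.normSq (M 1 0) + Quaternion.normSq (M 1 1) = 1 := by
  have := entry_eq_of hMs 1 1
  simp only [Matrix.mul_apply, Fin.sum_univ_two, Matrix.one_apply,
    Matrix.star_eq_conjTranspose, Matrix.conjTranspose_apply] at this
  exact normSq_sum_of_self (by simpa using this)

include hMs in
lemma row_orth : M 0 0 * star (M 1 0) + M 0 1 * star (M 1 1) = 0 := by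
  have := entry_eq_of hMs 0 1
  simp only [Matrix.mul_apply, Fin.sum_univ_two, Matrix.one_apply,
    Matrix.star_eq_conjTranspose, Matrix.conjTranspose_apply] at this
  simpa using this

end
end Sp2Aux
namespace Sp2Aux

lemma isCompact_sp2 : IsCompact ((unitary (Matrix (Fin 2) (Fin 2) ℍ[ℝ]) : Set (Matrix (Fin 2) (Fin 2) ℍ[ℝ]))) := by
  have hK : IsCompact {M : Matrix (Fin 2) (Fin 2) ℍ[ℝ] | ∀ i, ∀ j, M i j ∈ Metric.closedBall (0:ℍ[ℝ]) 1} := by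
    have : {M : Matrix (Fin 2) (Fin 2) ℍ[ℝ] | ∀ i, ∀ j, M i j ∈ Metric.closedBall (0:ℍ[ℝ]) 1}
        = Set.univ.pi (fun _ : Fin 2 => Set.univ.pi fun _ : Fin 2 => Metric.closedBall (0:ℍ[ℝ]) 1) := by
      ext M
      constructor
      · intro h i _ j _; exact h i j
      · intro h i j; exact h i (Set.mem_univ i) j (Set.mem_univ j)
    rw [this]
    exact isCompact_univ_pi fun i => isCompact_univ_pi fun j => isCompact_closedBall 0 1
  refine IsCompact.of_isClosed_subset hK ?_ ?_
  · have h1 : IsClosed {M : Matrix (Fin 2) (Fin 2) ℍ[ℝ] | star M * M = 1} :=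
      isClosed_eq (continuous_id.matrix_conjTranspose.matrix_mul continuous_id) continuous_const
    have h2 : IsClosed {M : Matrix (Fin 2) (Fin 2) ℍ[ℝ] | M * star M = 1} :=
      isClosed_eq (continuous_id.matrix_mul continuous_id.matrix_conjTranspose) continuous_const
    have : ((unitary (Matrix (Fin 2) (Fin 2) ℍ[ℝ]) : Set (Matrix (Fin 2) (Fin 2) ℍ[ℝ])))
        = {M | star M * M = 1} ∩ {M | M * star M = 1} := by
      ext M; exact Unitary.mem_iff
    rw [this]; exact h1.inter h2
  · rintro M hM i j
    have hsM : star M * M = 1 := (Unitary.mem_iff.mp hM).1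
    have hcol : Quaternion.normSq (M 0 j) + Quaternion.normSq (M 1 j) = 1 := by
      have := congrFun (congrFun hsM j) j
      simp only [Matrix.mul_apply, Fin.sum_univ_two, Matrix.one_apply,
        Matrix.star_eq_conjTranspose, Matrix.conjTranspose_apply, if_pos rfl] at this
      rw [Quaternion.star_mul_self, Quaternion.star_mul_self, ← Quaternion.coe_add,
        ← Quaternion.coe_one] at this
      exact Quaternion.coe_injective this
    have hii : Quaternion.normSq (M i j) ≤ 1 := by
      fin_cases i
      · show Quaternion.normSq (M 0 j) ≤ 1
        nlinarith [Quaternion.normSq_nonneg (a := M 0 j), Quaternion.normSq_nonneg (a := M 1 j)]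
      · show Quaternion.normSq (M 1 j) ≤ 1
        nlinarith [Quaternion.normSq_nonneg (a := M 0 j), Quaternion.normSq_nonneg (a := M 1 j)]
    rw [Metric.mem_closedBall, dist_zero_right]
    have := Quaternion.normSq_eq_norm_mul_self (M i j)
    nlinarith [norm_nonneg (M i j)]

instance : CompactSpace Sp2 := isCompact_iff_compactSpace.mp isCompact_sp2

/-- the invariant `x ↦ x ⊗ x` separating points of `ℝP⁴` -/
noncomputable def gram : RealProjectiveFourSpace → (Fin 5 → Fin 5 → ℝ) :=
  Quot.lift (fun x => fun i j => (x : EuclideanSpace ℝ (Fin 5)) i * (x : EuclideanSpace ℝ (Fin 5)) j)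
    (by
      rintro x y (h : (x : EuclideanSpace ℝ (Fin 5)) = -(y : EuclideanSpace ℝ (Fin 5)))
      funext i j
      show (x : EuclideanSpace ℝ (Fin 5)) i * (x : EuclideanSpace ℝ (Fin 5)) j
        = (y : EuclideanSpace ℝ (Fin 5)) i * (y : EuclideanSpace ℝ (Fin 5)) j
      have hk : ∀ k, (x : EuclideanSpace ℝ (Fin 5)) k = -(y : EuclideanSpace ℝ (Fin 5)) k :=
        fun k => congrArg (fun v : EuclideanSpace ℝ (Fin 5) => v k) h
      rw [hk i, hk j]
      simp only [PiLp.neg_apply]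
      ring)

lemma continuous_gram : Continuous gram := by
  refine continuous_quot_lift _ ?_
  refine continuous_pi fun i => continuous_pi fun j => ?_
  have hev : ∀ k : Fin 5, Continuous fun x : Metric.sphere (0 : EuclideanSpace ℝ (Fin 5)) 1 =>
      (x : EuclideanSpace ℝ (Fin 5)) k := fun k =>
    (EuclideanSpace.proj k).continuous.comp continuous_subtype_val
  exact (hev i).mul (hev j)

lemma injective_gram : Function.Injective gram := by
  rintro ⟨x⟩ ⟨y⟩ h
  have hx : ∀ i j, (x : EuclideanSpace ℝ (Fin 5)) i * (x : EuclideanSpace ℝ (Fin 5)) j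
      = (y : EuclideanSpace ℝ (Fin 5)) i * (y : EuclideanSpace ℝ (Fin 5)) j := by
    intro i j
    exact congrFun (congrFun h i) j
  -- find a nonzero coordinate of x
  have hxn : ‖(x : EuclideanSpace ℝ (Fin 5))‖ = 1 := mem_sphere_zero_iff_norm.mp x.2
  have hex : ∃ i, (x : EuclideanSpace ℝ (Fin 5)) i ≠ 0 := by
    by_contra hall
    push_neg at hall
    have : (x : EuclideanSpace ℝ (Fin 5)) = 0 := by
      ext i; exact hall i
    rw [this] at hxn; simp at hxn
  obtain ⟨i, hi⟩ := hex
  have hsq : (x : EuclideanSpace ℝ (Fin 5)) i ^ 2 = (y : EuclideanSpace ℝ (Fin 5)) i ^ 2 := by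
    have := hx i i; nlinarith [this]
  have hyi : (y : EuclideanSpace ℝ (Fin 5)) i = (x : EuclideanSpace ℝ (Fin 5)) i
      ∨ (y : EuclideanSpace ℝ (Fin 5)) i = -(x : EuclideanSpace ℝ (Fin 5)) i := by
    have := sq_eq_sq_iff_eq_or_eq_neg.mp hsq.symm
    exact this
  rcases hyi with hyi | hyi
  · have : ∀ j, (y : EuclideanSpace ℝ (Fin 5)) j = (x : EuclideanSpace ℝ (Fin 5)) j := by
      intro j
      have h1 := hx i j
      rw [hyi] at h1
      exact mul_left_cancel₀ hi h1.symm
    have hxy : (x : EuclideanSpace ℝ (Fin 5)) = (y : EuclideanSpace ℝ (Fin 5)) := by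
      ext j; exact (this j).symm
    exact congrArg _ (Subtype.ext hxy)
  · have hyni : (y : EuclideanSpace ℝ (Fin 5)) i ≠ 0 := by
      rw [hyi]; simpa using hi
    have : ∀ j, (y : EuclideanSpace ℝ (Fin 5)) j = -(x : EuclideanSpace ℝ (Fin 5)) j := by
      intro j
      have h1 := hx i j
      rw [hyi] at h1
      have h2 : (x : EuclideanSpace ℝ (Fin 5)) i * (y : EuclideanSpace ℝ (Fin 5)) j
          = (x : EuclideanSpace ℝ (Fin 5)) i * -(x : EuclideanSpace ℝ (Fin 5)) j := by
        have h3 := h1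
        ring_nf at h3 ⊢
        linarith
      exact mul_left_cancel₀ hi h2
    apply Quot.sound
    show (x : EuclideanSpace ℝ (Fin 5)) = -(y : EuclideanSpace ℝ (Fin 5))
    ext j
    show (x : EuclideanSpace ℝ (Fin 5)) j = -((y : EuclideanSpace ℝ (Fin 5)) j)
    rw [this j]
    ring

instance : T2Space RealProjectiveFourSpace :=
  T2Space.of_injective_continuous injective_gram continuous_gram

end Sp2Aux

namespace Sp2Aux

lemma mem_P_iff (R : Sp2) : R ∈ quatWreathP ↔
    ((∃ a b : ℍ[ℝ], ‖a‖ = 1 ∧ ‖b‖ = 1 ∧ R.val = !![a, 0; 0, b]) ∨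
      (∃ a b : ℍ[ℝ], ‖a‖ = 1 ∧ ‖b‖ = 1 ∧ R.val = !![0, a; b, 0])) := Iff.rfl

lemma coe_mul_sp2 (Q R : Sp2) : (Q * R).val = Q.val * R.val := rfl

/-- diagonal matrices with unit entries are unitary -/
lemma mk_diag {q r : ℍ[ℝ]} (hq : Quaternion.normSq q = 1) (hr : Quaternion.normSq r = 1) :
    (!![q, 0; 0, r] : Matrix (Fin 2) (Fin 2) ℍ[ℝ]) ∈ unitary (Matrix (Fin 2) (Fin 2) ℍ[ℝ]) := by
  refine Unitary.mem_iff.mpr ⟨?_, ?_⟩ <;>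
    · refine Matrix.ext fun i j => ?_
      fin_cases i <;> fin_cases j <;>
        simp [Matrix.mul_apply, Fin.sum_univ_two, Matrix.one_apply, Matrix.star_eq_conjTranspose,
          Matrix.conjTranspose_apply, Quaternion.star_mul_self, Quaternion.self_mul_star, hq, hr]

/-- antidiagonal matrices with unit entries are unitary -/
lemma mk_anti {q r : ℍ[ℝ]} (hq : Quaternion.normSq q = 1) (hr : Quaternion.normSq r = 1) :
    (!![0, r; q, 0] : Matrix (Fin 2) (Fin 2) ℍ[ℝ]) ∈ unitary (Matrix (Fin 2) (Fin 2) ℍ[ℝ]) := by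
  refine Unitary.mem_iff.mpr ⟨?_, ?_⟩ <;>
    · refine Matrix.ext fun i j => ?_
      fin_cases i <;> fin_cases j <;>
        simp [Matrix.mul_apply, Fin.sum_univ_two, Matrix.one_apply, Matrix.star_eq_conjTranspose,
          Matrix.conjTranspose_apply, Quaternion.star_mul_self, Quaternion.self_mul_star, hq, hr]


lemma mk_col {α : ℍ[ℝ]} {γ : ℝ} (h1 : Quaternion.normSq α + γ ^ 2 = 1) :
    (!![α, -((γ:ℍ[ℝ])); (γ:ℍ[ℝ]), star α] : Matrix (Fin 2) (Fin 2) ℍ[ℝ])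
      ∈ unitary (Matrix (Fin 2) (Fin 2) ℍ[ℝ]) := by
  have hgg : (γ:ℍ[ℝ]) * (γ:ℍ[ℝ]) = ((γ^2 : ℝ) : ℍ[ℝ]) := by rw [← Quaternion.coe_mul, sq]
  have k1 : star α * α + (γ:ℍ[ℝ]) * (γ:ℍ[ℝ]) = 1 := by
    rw [Quaternion.star_mul_self, hgg, ← Quaternion.coe_add, h1, Quaternion.coe_one]
  have k1' : (γ:ℍ[ℝ]) * (γ:ℍ[ℝ]) + star α * α = 1 := by rw [add_comm]; exact k1
  have k2 : α * star α + (γ:ℍ[ℝ]) * (γ:ℍ[ℝ]) = 1 := by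
    rw [Quaternion.self_mul_star, hgg, ← Quaternion.coe_add, h1, Quaternion.coe_one]
  have k2' : (γ:ℍ[ℝ]) * (γ:ℍ[ℝ]) + α * star α = 1 := by rw [add_comm]; exact k2
  have k3 : star α * -((γ:ℍ[ℝ])) + (γ:ℍ[ℝ]) * star α = 0 := by
    rw [mul_neg, ← coe_comm γ (star α), neg_add_cancel]
  have k4 : -((γ:ℍ[ℝ])) * α + α * (γ:ℍ[ℝ]) = 0 := by
    rw [neg_mul, coe_comm γ α, neg_add_cancel]
  have k5 : α * (γ:ℍ[ℝ]) + -((γ:ℍ[ℝ])) * α = 0 := by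
    rw [neg_mul, coe_comm γ α, add_neg_cancel]
  have k6 : (γ:ℍ[ℝ]) * star α + star α * -((γ:ℍ[ℝ])) = 0 := by
    rw [mul_neg, ← coe_comm γ (star α), add_neg_cancel]
  have hstarM : star (!![α, -((γ:ℍ[ℝ])); (γ:ℍ[ℝ]), star α])
      = !![star α, (γ:ℍ[ℝ]); -((γ:ℍ[ℝ])), α] := by
    refine Matrix.ext fun i j => ?_
    fin_cases i <;> fin_cases j <;>
      simp [Matrix.star_eq_conjTranspose, Matrix.conjTranspose_apply, Quaternion.star_coe]
  refine Unitary.mem_iff.mpr ⟨?_, ?_⟩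
  · rw [hstarM, Matrix.mul_fin_two, Matrix.one_fin_two, k1, k3, k4]
    rw [neg_mul_neg, k2']
  · rw [hstarM, Matrix.mul_fin_two, Matrix.one_fin_two, k5, k6, k1']
    rw [neg_mul_neg, k2]

/-- The map `Sp(2) → ℝP⁴`. -/
noncomputable def toP4 (Q : Sp2) : RealProjectiveFourSpace :=
  Quot.mk _ ⟨hopf (Q.val 0 0) (Q.val 1 0),
    hopf_mem_sphere (col1_normSq (Unitary.mem_iff.mp Q.prop).1)⟩

lemma toP4_respects (Q Q' : Sp2) (h : Q⁻¹ * Q' ∈ quatWreathP) : toP4 Q = toP4 Q' := by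
  have h1 : Q * (Q⁻¹ * Q') = Q' := mul_inv_cancel_left Q Q'
  have hQ'val : Q'.val = Q.val * (Q⁻¹ * Q').val := by
    conv_lhs => rw [← h1]
    rfl
  obtain (⟨a, b, ha, hb, hval⟩ | ⟨a, b, ha, hb, hval⟩) := (mem_P_iff _).mp h
  · -- diagonal case
    have hna : Quaternion.normSq a = 1 := by
      rw [Quaternion.normSq_eq_norm_mul_self, ha, one_mul]
    have e0 : Q'.val 0 0 = Q.val 0 0 * a := by
      rw [hQ'val, hval]; simp [Matrix.mul_apply, Fin.sum_univ_two]
    have e1 : Q'.val 1 0 = Q.val 1 0 * a := by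
      rw [hQ'val, hval]; simp [Matrix.mul_apply, Fin.sum_univ_two]
    unfold toP4
    refine congrArg (Quot.mk _) (Subtype.ext ?_)
    show hopf (Q.val 0 0) (Q.val 1 0) = hopf (Q'.val 0 0) (Q'.val 1 0)
    rw [e0, e1, hopf_mul a hna]
  · -- antidiagonal case
    have hnb : Quaternion.normSq b = 1 := by
      rw [Quaternion.normSq_eq_norm_mul_self, hb, one_mul]
    have e0 : Q'.val 0 0 = Q.val 0 1 * b := by
      rw [hQ'val, hval]; simp [Matrix.mul_apply, Fin.sum_univ_two]
    have e1 : Q'.val 1 0 = Q.val 1 1 * b := by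
      rw [hQ'val, hval]; simp [Matrix.mul_apply, Fin.sum_univ_two]
    have hMs : Q.val * star Q.val = 1 := (Unitary.mem_iff.mp Q.prop).2
    have hrow := row_orth hMs
    have hr1 := row1_normSq hMs
    have hr2 := row2_normSq hMs
    have hneg : hopf (Q'.val 0 0) (Q'.val 1 0) = -hopf (Q.val 0 0) (Q.val 1 0) := by
      rw [e0, e1, hopf_mul b hnb]
      refine hopf_neg_of ?_ ?_
      · exact eq_neg_of_add_eq_zero_right hrow
      · linarith
    unfold toP4
    refine Quot.sound ?_
    show hopf (Q.val 0 0) (Q.val 1 0) = -(hopf (Q'.val 0 0) (Q'.val 1 0))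
    rw [hneg, neg_neg]

end Sp2Aux

namespace Sp2Aux

lemma eqv_cases {x y : Metric.sphere (0 : EuclideanSpace ℝ (Fin 5)) 1}
    (h : Relation.EqvGen
      (fun x y : Metric.sphere (0 : EuclideanSpace ℝ (Fin 5)) 1 =>
        (x : EuclideanSpace ℝ (Fin 5)) = -(y : EuclideanSpace ℝ (Fin 5))) x y) :
    x = y ∨ (x : EuclideanSpace ℝ (Fin 5)) = -(y : EuclideanSpace ℝ (Fin 5)) := by
  induction h with
  | rel a b hab => exact Or.inr hab
  | refl a => exact Or.inl rfl
  | symm a b hab ih =>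
    rcases ih with h1 | h1
    · exact Or.inl h1.symm
    · right; rw [h1]; simp
  | trans a b c hab hbc ih1 ih2 =>
    rcases ih1 with h1 | h1 <;> rcases ih2 with h2 | h2
    · exact Or.inl (h1.trans h2)
    · right; rw [h1]; exact h2
    · right; rw [← h2]; exact h1
    · left
      apply Subtype.ext
      rw [h1, h2]; simp

lemma normSq_one_ne_zero {q : ℍ[ℝ]} (hq : Quaternion.normSq q = 1) : q ≠ 0 := by
  intro h0; rw [h0] at hq; simp at hq

lemma toP4_inj (Q Q' : Sp2) (h : toP4 Q = toP4 Q') : Q⁻¹ * Q' ∈ quatWreathP := by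
  have hsQ : star Q.val * Q.val = 1 := (Unitary.mem_iff.mp Q.prop).1
  have hsQ' : star Q'.val * Q'.val = 1 := (Unitary.mem_iff.mp Q'.prop).1
  have hMsQ' : Q'.val * star Q'.val = 1 := (Unitary.mem_iff.mp Q'.prop).2
  unfold toP4 at h
  rcases eqv_cases (Quot.eq.mp h) with h1 | h1
  · -- same hopf point
    have hp : hopf (Q.val 0 0) (Q.val 1 0) = hopf (Q'.val 0 0) (Q'.val 1 0) :=
      congrArg Subtype.val h1
    obtain ⟨h2, h4⟩ := hopf_inj_data hp
    have hna : Quaternion.normSq (Q.val 0 0) = Quaternion.normSq (Q'.val 0 0) := by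
      have := col1_normSq hsQ; have := col1_normSq hsQ'; linarith
    have hnc : Quaternion.normSq (Q.val 1 0) = Quaternion.normSq (Q'.val 1 0) := by
      have := col1_normSq hsQ; have := col1_normSq hsQ'; linarith
    obtain ⟨q, hq, haq, hcq⟩ := fiber (col1_normSq hsQ) h2 hna hnc
    have ho' : star (Q.val 0 0) * Q'.val 0 1 + star (Q.val 1 0) * Q'.val 1 1 = 0 := by
      have h0 := col_orth hsQ'
      rw [haq, hcq, StarMul.star_mul, StarMul.star_mul, mul_assoc, mul_assoc, ← mul_add] at h0
      have hqne : star q ≠ 0 := by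
        simpa using normSq_one_ne_zero hq
      exact (mul_eq_zero.mp h0).resolve_left hqne
    obtain ⟨r, hr, hxr, hyr⟩ :=
      orth (col1_normSq hsQ) (col2_normSq hsQ) (col2_normSq hsQ') (col_orth hsQ) ho'
    have hQ'eq : Q' = Q * ⟨!![q, 0; 0, r], mk_diag hq hr⟩ := by
      apply Subtype.ext
      show Q'.val = Q.val * !![q, 0; 0, r]
      refine Matrix.ext fun i j => ?_
      fin_cases i <;> fin_cases j <;>
        simp [Matrix.mul_apply, Fin.sum_univ_two, haq, hcq, hxr, hyr]
    rw [hQ'eq, inv_mul_cancel_left]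
    exact Or.inl ⟨q, r, norm_eq_one_of_normSq hq, norm_eq_one_of_normSq hr, rfl⟩
  · -- antipodal hopf points
    have hp1 : hopf (Q.val 0 0) (Q.val 1 0) = -hopf (Q'.val 0 0) (Q'.val 1 0) := h1
    have hneg' : hopf (Q'.val 0 1) (Q'.val 1 1) = -hopf (Q'.val 0 0) (Q'.val 1 0) :=
      hopf_neg_of (eq_neg_of_add_eq_zero_right (row_orth hMsQ'))
        (by have := row1_normSq hMsQ'; have := row2_normSq hMsQ'; linarith)
    have hp2 : hopf (Q.val 0 0) (Q.val 1 0) = hopf (Q'.val 0 1) (Q'.val 1 1) :=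
      hp1.trans hneg'.symm
    obtain ⟨h2, h4⟩ := hopf_inj_data hp2
    have hna : Quaternion.normSq (Q.val 0 0) = Quaternion.normSq (Q'.val 0 1) := by
      have := col1_normSq hsQ; have := col2_normSq hsQ'; linarith
    have hnc : Quaternion.normSq (Q.val 1 0) = Quaternion.normSq (Q'.val 1 1) := by
      have := col1_normSq hsQ; have := col2_normSq hsQ'; linarith
    obtain ⟨q, hq, hxq, hyq⟩ := fiber (col1_normSq hsQ) h2 hna hnc
    -- col1 of Q' is orthogonal to col1 of Q
    have ho' : star (Q.val 0 0) * Q'.val 0 0 + star (Q.val 1 0) * Q'.val 1 0 = 0 := by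
      have h0 := col_orth hsQ'
      rw [hxq, hyq, ← mul_assoc, ← mul_assoc, ← add_mul] at h0
      have h3 : star (Q'.val 0 0) * Q.val 0 0 + star (Q'.val 1 0) * Q.val 1 0 = 0 :=
        (mul_eq_zero.mp h0).resolve_right (normSq_one_ne_zero hq)
      have h5 := congrArg star h3
      simpa [star_add, StarMul.star_mul, add_comm] using h5
    obtain ⟨r, hr, har, hcr⟩ :=
      orth (col1_normSq hsQ) (col2_normSq hsQ) (col1_normSq hsQ') (col_orth hsQ) ho'
    have hQ'eq : Q' = Q * ⟨!![0, q; r, 0], mk_anti hr hq⟩ := by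
      apply Subtype.ext
      show Q'.val = Q.val * !![0, q; r, 0]
      refine Matrix.ext fun i j => ?_
      fin_cases i <;> fin_cases j <;>
        simp [Matrix.mul_apply, Fin.sum_univ_two, hxq, hyq, har, hcr]
    rw [hQ'eq, inv_mul_cancel_left]
    exact Or.inr ⟨q, r, norm_eq_one_of_normSq hq, norm_eq_one_of_normSq hr, rfl⟩

end Sp2Aux

namespace Sp2Aux

lemma toP4_surj : Function.Surjective toP4 := by
  intro z
  obtain ⟨x, rfl⟩ := Quot.exists_rep z
  have hxn : ‖(x : EuclideanSpace ℝ (Fin 5))‖ = 1 := mem_sphere_zero_iff_norm.mp x.2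
  have hsum : ∑ i : Fin 5, ((x : EuclideanSpace ℝ (Fin 5)) i) ^ 2 = 1 := by
    rw [EuclideanSpace.norm_eq] at hxn
    have h1 : ∑ i : Fin 5, ‖(x : EuclideanSpace ℝ (Fin 5)) i‖ ^ 2 = 1 := by
      have := congrArg (fun s => s ^ 2) hxn
      simpa [Real.sq_sqrt (Finset.sum_nonneg fun i _ => sq_nonneg _)] using this
    simpa [Real.norm_eq_abs, sq_abs] using h1
  rw [Fin.sum_univ_five] at hsum
  set x0 := (x : EuclideanSpace ℝ (Fin 5)) 0
  set x1 := (x : EuclideanSpace ℝ (Fin 5)) 1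
  set x2 := (x : EuclideanSpace ℝ (Fin 5)) 2
  set x3 := (x : EuclideanSpace ℝ (Fin 5)) 3
  set t := (x : EuclideanSpace ℝ (Fin 5)) 4 with ht_def
  set v : ℍ[ℝ] := ⟨x0, x1, x2, x3⟩ with hv_def
  have hv : Quaternion.normSq v = 1 - t ^ 2 := by
    rw [Quaternion.normSq_def']
    show x0 ^ 2 + x1 ^ 2 + x2 ^ 2 + x3 ^ 2 = 1 - t ^ 2
    linarith
  by_cases ht : t = 1
  · -- north pole: use the identity matrix
    refine ⟨1, ?_⟩
    have hz : ∀ i : Fin 4, True := fun _ => trivial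
    have h0 : x0 = 0 := by nlinarith [sq_nonneg x0, sq_nonneg x1, sq_nonneg x2, sq_nonneg x3]
    have h1 : x1 = 0 := by nlinarith [sq_nonneg x0, sq_nonneg x1, sq_nonneg x2, sq_nonneg x3]
    have h2 : x2 = 0 := by nlinarith [sq_nonneg x0, sq_nonneg x1, sq_nonneg x2, sq_nonneg x3]
    have h3 : x3 = 0 := by nlinarith [sq_nonneg x0, sq_nonneg x1, sq_nonneg x2, sq_nonneg x3]
    unfold toP4
    refine congrArg (Quot.mk _) (Subtype.ext ?_)
    show hopf ((1 : Sp2).val 0 0) ((1 : Sp2).val 1 0) = (x : EuclideanSpace ℝ (Fin 5))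
    have e00 : (1 : Sp2).val 0 0 = 1 := rfl
    have e10 : (1 : Sp2).val 1 0 = 0 := rfl
    rw [e00, e10]
    ext i
    fin_cases i
    · simp [hopf_apply]; exact h0.symm
    · simp [hopf_apply]; exact h1.symm
    · simp [hopf_apply]; exact h2.symm
    · simp [hopf_apply]; exact h3.symm
    · simp [hopf_apply, Quaternion.normSq_def']
      exact ht.symm
  · -- general case
    have ht2 : t ^ 2 ≤ 1 := by nlinarith [sq_nonneg x0, sq_nonneg x1, sq_nonneg x2, sq_nonneg x3]
    have htlt : t < 1 := by
      rcases lt_or_eq_of_le (show t ≤ 1 by nlinarith) with h | h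
      · exact h
      · exact absurd h ht
    set c0 : ℝ := Real.sqrt ((1 - t) / 2) with hc0_def
    have hc0pos : 0 < c0 := Real.sqrt_pos.mpr (by linarith)
    have hc2 : c0 ^ 2 = (1 - t) / 2 := Real.sq_sqrt (by linarith)
    set a : ℍ[ℝ] := ((2 * c0)⁻¹ : ℝ) • v with ha_def
    set sA : ℝ := (1 + t) / 2 with hsA_def
    set sC : ℝ := (1 - t) / 2 with hsC_def
    have hsu1 : sA + sC = 1 := by rw [hsA_def, hsC_def]; ring
    have hsu2 : sC + sA = 1 := by rw [hsA_def, hsC_def]; ring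
    have hc2' : c0 ^ 2 = sC := hc2
    have hna : Quaternion.normSq a = sA := by
      rw [ha_def, ← Quaternion.coe_mul_eq_smul, _root_.map_mul, normSq_coe', hv]
      rw [inv_pow, mul_pow]
      have h4 : (2 : ℝ) ^ 2 * c0 ^ 2 = 2 * (1 - t) := by rw [hc2]; ring
      rw [h4, inv_mul_eq_div, hsA_def]
      rw [div_eq_div_iff (by nlinarith) (by norm_num : (2:ℝ) ≠ 0)]
      ring
    have hsumn : Quaternion.normSq a + Quaternion.normSq ((c0 : ℍ[ℝ])) = 1 := by
      rw [hna, normSq_coe', hc2']; exact hsu1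
    -- quaternion identities needed for unitarity
    have hstar_aa : star a * a = ((sA : ℝ) : ℍ[ℝ]) := by
      rw [Quaternion.star_mul_self, hna]
    have haa_star : a * star a = ((sA : ℝ) : ℍ[ℝ]) := by
      rw [Quaternion.self_mul_star, hna]
    have hcc : (c0 : ℍ[ℝ]) * (c0 : ℍ[ℝ]) = ((sC : ℝ) : ℍ[ℝ]) := by
      rw [← Quaternion.coe_mul, ← sq, hc2']
    have hca : (c0 : ℍ[ℝ]) * a = a * (c0 : ℍ[ℝ]) := coe_comm c0 a
    have hcsa : (c0 : ℍ[ℝ]) * star a = star a * (c0 : ℍ[ℝ]) := coe_comm c0 (star a)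
    have hstarc : star ((c0 : ℍ[ℝ])) = (c0 : ℍ[ℝ]) := by
      rw [Quaternion.star_coe]
    have hQu : (!![a, -((c0 : ℝ):ℍ[ℝ]); ((c0 : ℝ):ℍ[ℝ]), star a] : Matrix (Fin 2) (Fin 2) ℍ[ℝ])
        ∈ unitary (Matrix (Fin 2) (Fin 2) ℍ[ℝ]) :=
      mk_col (by rw [hna, hc2']; exact hsu1)
    refine ⟨⟨_, hQu⟩, ?_⟩
    unfold toP4
    refine congrArg (Quot.mk _) (Subtype.ext ?_)
    show hopf a (c0 : ℍ[ℝ]) = (x : EuclideanSpace ℝ (Fin 5))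
    have hkey : a * star ((c0 : ℍ[ℝ])) = ((2⁻¹ : ℝ) : ℍ[ℝ]) * v := by
      rw [hstarc, ha_def, ← Quaternion.coe_mul_eq_smul, mul_assoc, ← coe_comm c0 v, ← mul_assoc,
        ← Quaternion.coe_mul]
      congr 1
      rw [mul_inv, mul_assoc, inv_mul_cancel₀ (ne_of_gt hc0pos), mul_one]
    have hre : (a * star ((c0 : ℍ[ℝ]))).re = 2⁻¹ * x0 := by
      rw [hkey, Quaternion.coe_mul_eq_smul, Quaternion.re_smul]; rfl
    have himI : (a * star ((c0 : ℍ[ℝ]))).imI = 2⁻¹ * x1 := by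
      rw [hkey, Quaternion.coe_mul_eq_smul, Quaternion.imI_smul]; rfl
    have himJ : (a * star ((c0 : ℍ[ℝ]))).imJ = 2⁻¹ * x2 := by
      rw [hkey, Quaternion.coe_mul_eq_smul, Quaternion.imJ_smul]; rfl
    have himK : (a * star ((c0 : ℍ[ℝ]))).imK = 2⁻¹ * x3 := by
      rw [hkey, Quaternion.coe_mul_eq_smul, Quaternion.imK_smul]; rfl
    have hlast : Quaternion.normSq a - Quaternion.normSq ((c0 : ℍ[ℝ])) = t := by
      rw [hna, normSq_coe', hc2', hsA_def, hsC_def]; ring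
    ext i
    fin_cases i
    · show 2 * (a * star ((c0 : ℝ) : ℍ[ℝ])).re = x0
      rw [hre, ← mul_assoc]; norm_num
    · show 2 * (a * star ((c0 : ℝ) : ℍ[ℝ])).imI = x1
      rw [himI, ← mul_assoc]; norm_num
    · show 2 * (a * star ((c0 : ℝ) : ℍ[ℝ])).imJ = x2
      rw [himJ, ← mul_assoc]; norm_num
    · show 2 * (a * star ((c0 : ℝ) : ℍ[ℝ])).imK = x3
      rw [himK, ← mul_assoc]; norm_num
    · show Quaternion.normSq a - Quaternion.normSq ((c0 : ℝ) : ℍ[ℝ]) = t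
      exact hlast

end Sp2Aux

namespace Sp2Aux

lemma continuous_toP4 : Continuous toP4 := by
  have hA : Continuous fun Q : Sp2 => Q.val := continuous_subtype_val
  have hentry : ∀ i j, Continuous fun Q : Sp2 => Q.val i j := fun i j => hA.matrix_elem i j
  have hmul : Continuous fun Q : Sp2 => (Q.val 0 0) * star (Q.val 1 0) :=
    (hentry 0 0).mul ((hentry 1 0).star)
  have hvec : Continuous fun Q : Sp2 =>
      (![2 * ((Q.val 0 0) * star (Q.val 1 0)).re, 2 * ((Q.val 0 0) * star (Q.val 1 0)).imI,
        2 * ((Q.val 0 0) * star (Q.val 1 0)).imJ, 2 * ((Q.val 0 0) * star (Q.val 1 0)).imK,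
        Quaternion.normSq (Q.val 0 0) - Quaternion.normSq (Q.val 1 0)] : Fin 5 → ℝ) := by
    refine continuous_pi fun i => ?_
    fin_cases i
    · show Continuous fun Q : Sp2 => 2 * ((Q.val 0 0) * star (Q.val 1 0)).re
      exact continuous_const.mul (Quaternion.continuous_re.comp hmul)
    · show Continuous fun Q : Sp2 => 2 * ((Q.val 0 0) * star (Q.val 1 0)).imI
      exact continuous_const.mul (Quaternion.continuous_imI.comp hmul)
    · show Continuous fun Q : Sp2 => 2 * ((Q.val 0 0) * star (Q.val 1 0)).imJ
      exact continuous_const.mul (Quaternion.continuous_imJ.comp hmul)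
    · show Continuous fun Q : Sp2 => 2 * ((Q.val 0 0) * star (Q.val 1 0)).imK
      exact continuous_const.mul (Quaternion.continuous_imK.comp hmul)
    · show Continuous fun Q : Sp2 =>
        Quaternion.normSq (Q.val 0 0) - Quaternion.normSq (Q.val 1 0)
      exact (Quaternion.continuous_normSq.comp (hentry 0 0)).sub
        (Quaternion.continuous_normSq.comp (hentry 1 0))
  have hhopf : Continuous fun Q : Sp2 => hopf (Q.val 0 0) (Q.val 1 0) := by
    unfold hopf
    exact ((EuclideanSpace.equiv (Fin 5) ℝ).symm.continuous).comp hvec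
  unfold toP4
  exact continuous_quot_mk.comp (Continuous.subtype_mk hhopf _)

noncomputable def bigF : Sp2 ⧸ quatWreathP → RealProjectiveFourSpace :=
  Quotient.lift toP4 fun Q Q' h => toP4_respects Q Q' (QuotientGroup.leftRel_apply.mp h)

lemma continuous_bigF : Continuous bigF :=
  continuous_toP4.quotient_lift _

lemma bij_bigF : Function.Bijective bigF := by
  constructor
  · intro z w
    induction z using Quotient.ind
    induction w using Quotient.ind
    intro h
    exact Quotient.sound (QuotientGroup.leftRel_apply.mpr (toP4_inj _ _ h))
  · intro z
    obtain ⟨Q, hQ⟩ := toP4_surj z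
    exact ⟨Quotient.mk _ Q, hQ⟩

end Sp2Aux

/-- **The coset space `Sp(2)/P` is homeomorphic to real projective 4-space `ℝP⁴`.** -/
theorem sp2_quotient_wreath_homeo_projectiveFourSpace :
    Nonempty ((Sp2 ⧸ quatWreathP) ≃ₜ RealProjectiveFourSpace) := by
  exact ⟨Continuous.homeoOfEquivCompactToT2
    (f := Equiv.ofBijective _ Sp2Aux.bij_bigF) Sp2Aux.continuous_bigF⟩
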